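/- arXiv:2505.24393 — 2 statements merged into one kernel-verified Lean document; each statement's English description precedes it below -/
import Mathlib

section
/- If the profile (π_v = 1 for all validators, π_p = 1) is a Nash equilibrium for the validators — i.e., EU_v(π; 1, 1) ≤ EU_v(1; 1, 1) for every π ∈ [0,1] — then necessarily c_m ≤ (π_a/N)·c_off; equivalently, if c_m > (π_a/N)·c_off, then choosing π = 0 gives EU_v(0; 1, 1) > EU_v(1; 1, 1). -/
noncomputable def U_On (f_v c_m r_v : ℝ) (N : ℕ) (πp πv : ℝ) : ℝ :=
  f_v - c_m + (1 - πp) * r_v / (1 + ((N : ℝ) - 1) * πv)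

noncomputable def U_Off (f_v πa c_off C_fail : ℝ) (N : ℕ) (πp πv : ℝ) : ℝ :=
  πp * f_v - (πa / (N : ℝ)) * c_off - (1 - πp) * (1 - πv) ^ (N - 1) * C_fail

noncomputable def EU_v (f_v c_m πa c_off C_fail r_v : ℝ) (N : ℕ) (π πp πv : ℝ) : ℝ :=
  π * U_On f_v c_m r_v N πp πv + (1 - π) * U_Off f_v πa c_off C_fail N πp πv

/-! With an honest proposer there is no fraud, so being online earns `f_v - c_m` and being offline
earns `f_v` minus the expected attention-test penalty `(πa / N) * c_off`. Hence deviating to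
`π = 0` gains exactly `c_m - (πa / N) * c_off`, and full participation is a best response iff
this gain is nonpositive. -/

section

variable (f_v c_m πa c_off C_fail r_v : ℝ) (N : ℕ) (πp πv : ℝ)

theorem U_On_honest_proposer : U_On f_v c_m r_v N 1 πv = f_v - c_m := by
  simp [U_On]

theorem U_Off_honest_proposer :
    U_Off f_v πa c_off C_fail N 1 πv = f_v - (πa / (N : ℝ)) * c_off := by
  simp [U_Off]

theorem EU_v_one : EU_v f_v c_m πa c_off C_fail r_v N 1 πp πv = U_On f_v c_m r_v N πp πv := by
  simp [EU_v]

theorem EU_v_zero :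
    EU_v f_v c_m πa c_off C_fail r_v N 0 πp πv = U_Off f_v πa c_off C_fail N πp πv := by
  simp [EU_v]

theorem EU_v_zero_sub_EU_v_one_honest_proposer :
    EU_v f_v c_m πa c_off C_fail r_v N 0 1 πv - EU_v f_v c_m πa c_off C_fail r_v N 1 1 πv =
      c_m - (πa / (N : ℝ)) * c_off := by
  rw [EU_v_zero, EU_v_one, U_Off_honest_proposer, U_On_honest_proposer]
  ring

theorem EU_v_one_lt_EU_v_zero_honest_proposer_iff :
    EU_v f_v c_m πa c_off C_fail r_v N 1 1 πv < EU_v f_v c_m πa c_off C_fail r_v N 0 1 πv ↔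
      (πa / (N : ℝ)) * c_off < c_m := by
  rw [← sub_pos, EU_v_zero_sub_EU_v_one_honest_proposer, sub_pos]

end

theorem equilibrium_necessity_of_cost_condition_general
    (f_v c_m πa c_off C_fail r_v : ℝ) (N : ℕ) :
    ((∀ π ∈ Set.Icc (0 : ℝ) 1,
        EU_v f_v c_m πa c_off C_fail r_v N π 1 1 ≤
          EU_v f_v c_m πa c_off C_fail r_v N 1 1 1) →
      c_m ≤ (πa / (N : ℝ)) * c_off) ∧
    ((πa / (N : ℝ)) * c_off < c_m →
      EU_v f_v c_m πa c_off C_fail r_v N 1 1 1 <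
        EU_v f_v c_m πa c_off C_fail r_v N 0 1 1) := by
  constructor
  · intro hNash
    have hzero := hNash 0 (Set.left_mem_Icc.mpr zero_le_one)
    rw [← not_lt, ← EU_v_one_lt_EU_v_zero_honest_proposer_iff f_v c_m πa c_off C_fail r_v N 1]
    exact hzero.not_gt
  · exact (EU_v_one_lt_EU_v_zero_honest_proposer_iff f_v c_m πa c_off C_fail r_v N 1).mpr

theorem equilibrium_necessity_of_cost_condition
    (f_v c_m πa c_off C_fail r_v : ℝ) (N : ℕ) (hN : 1 ≤ N)
    (hπa : πa ∈ Set.Icc (0 : ℝ) 1) :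
    ((∀ π ∈ Set.Icc (0 : ℝ) 1,
        EU_v f_v c_m πa c_off C_fail r_v N π 1 1 ≤
          EU_v f_v c_m πa c_off C_fail r_v N 1 1 1) →
      c_m ≤ (πa / (N : ℝ)) * c_off) ∧
    ((πa / (N : ℝ)) * c_off < c_m →
      EU_v f_v c_m πa c_off C_fail r_v N 1 1 1 <
        EU_v f_v c_m πa c_off C_fail r_v N 0 1 1) :=
  equilibrium_necessity_of_cost_condition_general f_v c_m πa c_off C_fail r_v N
end

section
/- If c_m < (π_a/N)·c_off, then π = 1 is the strict unique maximizer of the validator's expected utility against an honest proposer and attentive peers: for every π ∈ [0,1) one has EU_v(π; 1, 1) < EU_v(1; 1, 1). -/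
/-! Against an honest proposer the fraud terms vanish, so being online gains exactly
`(πa / N) * c_off - c_m` over being offline. The expected utility is affine in `π` with this
slope, hence strictly increasing when the slope is positive. -/

section ValidatorUtility

variable (f_v c_m πa c_off C_fail r_v : ℝ) (N : ℕ)

theorem EU_v_eq_U_Off_add (π πp πv : ℝ) :
    EU_v f_v c_m πa c_off C_fail r_v N π πp πv =
      U_Off f_v πa c_off C_fail N πp πv +
        π * (U_On f_v c_m r_v N πp πv - U_Off f_v πa c_off C_fail N πp πv) := by
  unfold EU_v
  ring

theorem strictMono_EU_v {πp πv : ℝ}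
    (h : U_Off f_v πa c_off C_fail N πp πv < U_On f_v c_m r_v N πp πv) :
    StrictMono fun π => EU_v f_v c_m πa c_off C_fail r_v N π πp πv := by
  intro π π' hππ'
  simp only [EU_v_eq_U_Off_add]
  exact add_lt_add_right (mul_lt_mul_of_pos_right hππ' (sub_pos.mpr h)) _

theorem U_On_honest (πv : ℝ) : U_On f_v c_m r_v N 1 πv = f_v - c_m := by
  simp [U_On]

theorem U_Off_honest (πv : ℝ) :
    U_Off f_v πa c_off C_fail N 1 πv = f_v - (πa / (N : ℝ)) * c_off := by
  simp [U_Off]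

theorem U_Off_lt_U_On_honest {πv : ℝ} (h : c_m < (πa / (N : ℝ)) * c_off) :
    U_Off f_v πa c_off C_fail N 1 πv < U_On f_v c_m r_v N 1 πv := by
  rw [U_On_honest, U_Off_honest]
  linarith

end ValidatorUtility

theorem validator_strict_unique_maximizer_general
    (f_v c_m πa c_off C_fail r_v : ℝ) (N : ℕ)
    (h : c_m < (πa / (N : ℝ)) * c_off) :
    ∀ π ∈ Set.Ico (0 : ℝ) 1,
      EU_v f_v c_m πa c_off C_fail r_v N π 1 1 <
        EU_v f_v c_m πa c_off C_fail r_v N 1 1 1 := fun _ hπ =>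
  strictMono_EU_v f_v c_m πa c_off C_fail r_v N
    (U_Off_lt_U_On_honest f_v c_m πa c_off C_fail r_v N h) hπ.2

theorem validator_strict_unique_maximizer
    (f_v c_m πa c_off C_fail r_v : ℝ) (N : ℕ) (hN : 1 ≤ N)
    (hπa : πa ∈ Set.Icc (0 : ℝ) 1)
    (h : c_m < (πa / (N : ℝ)) * c_off) :
    ∀ π ∈ Set.Ico (0 : ℝ) 1,
      EU_v f_v c_m πa c_off C_fail r_v N π 1 1 <
        EU_v f_v c_m πa c_off C_fail r_v N 1 1 1 :=
  validator_strict_unique_maximizer_general f_v c_m πa c_off C_fail r_v N h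
end
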